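/- arXiv:1405.5362 — 2 statements merged into one kernel-verified Lean document; each statement's English description precedes it below -/
import Mathlib

section
/- The seven holomorphic vector fields S2 = ∂/∂w3, S1 = ∂/∂w2, T = ∂/∂w1, L1, L2, D, R on C^4 (with the explicit coefficients given) satisfy the bracket relations: [T, L2] = 4 S2, [T, L1] = 4 S1, [L2, L1] = −4T, [S2, D] = 3S2, [S1, D] = 3S1, [T, D] = 2T, [L2, D] = L2, [L1, D] = L1, [S2, R] = −S1, [S1, R] = S2, [L2, R] = −L1, [L1, R] = L2, [D, R] = 0, and [T, R] = 0. -/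
/-!
In coordinates the bracket is `[X, Y] = DY · X − DX · Y`. The fields `S2`, `S1`, `T` are
constant, `D` and `R` are linear, and `L1`, `L2` are quadratic in `z` and affine in `w1`, so every
Jacobian is explicit and each relation reduces to a polynomial identity in `(z, w1)` that uses
only `i² = −1`.
-/

open Complex

/-- Lie bracket of holomorphic vector fields on `ℂ⁴` in coordinates
`(z, w1, w2, w3)` (indices `0,…,3`): `[X,Y]^i = ∑_j (X^j ∂_j Y^i − Y^j ∂_j X^i)`. -/
noncomputable def lieC (X Y : (Fin 4 → ℂ) → Fin 4 → ℂ) :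
    (Fin 4 → ℂ) → Fin 4 → ℂ :=
  fun p i => ∑ j : Fin 4,
    (X p j * fderiv ℂ (fun q => Y q i) p (Pi.single j 1)
     - Y p j * fderiv ℂ (fun q => X q i) p (Pi.single j 1))

def S2 : (Fin 4 → ℂ) → Fin 4 → ℂ := fun _ => ![0, 0, 0, 1]
def S1 : (Fin 4 → ℂ) → Fin 4 → ℂ := fun _ => ![0, 0, 1, 0]
def Tf : (Fin 4 → ℂ) → Fin 4 → ℂ := fun _ => ![0, 1, 0, 0]
def L1 : (Fin 4 → ℂ) → Fin 4 → ℂ := fun p =>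
  ![1, 2 * Complex.I * p 0, 2 * Complex.I * p 0 ^ 2 + 4 * p 1, 2 * p 0 ^ 2]
def L2 : (Fin 4 → ℂ) → Fin 4 → ℂ := fun p =>
  ![Complex.I, 2 * p 0, 2 * p 0 ^ 2, -(2 * Complex.I * p 0 ^ 2 - 4 * p 1)]
def Df : (Fin 4 → ℂ) → Fin 4 → ℂ := fun p =>
  ![p 0, 2 * p 1, 3 * p 2, 3 * p 3]
def Rf : (Fin 4 → ℂ) → Fin 4 → ℂ := fun p =>
  ![Complex.I * p 0, 0, -p 3, p 2]

theorem fderiv_eval {𝕜 F ι : Type*} [NontriviallyNormedField 𝕜] [NormedAddCommGroup F]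
    [NormedSpace 𝕜 F] [Fintype ι] (i : ι) (x : ι → F) :
    fderiv 𝕜 (fun f : ι → F => f i) x = ContinuousLinearMap.proj i :=
  (hasFDerivAt_apply i x).fderiv

theorem fderiv_apply_apply {𝕜 E F ι : Type*} [NontriviallyNormedField 𝕜] [NormedAddCommGroup E]
    [NormedSpace 𝕜 E] [NormedAddCommGroup F] [NormedSpace 𝕜 F] [Fintype ι]
    {Φ : E → ι → F} {x : E} (h : DifferentiableAt 𝕜 Φ x) (v : E) (i : ι) :
    fderiv 𝕜 Φ x v i = fderiv 𝕜 (fun y => Φ y i) x v := by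
  rw [fderiv_apply h]
  rfl

theorem lieC_eq_fderiv_sub {X Y : (Fin 4 → ℂ) → Fin 4 → ℂ} {p : Fin 4 → ℂ}
    (hX : DifferentiableAt ℂ X p) (hY : DifferentiableAt ℂ Y p) :
    lieC X Y p = fderiv ℂ Y p (X p) - fderiv ℂ X p (Y p) := by
  ext i
  simp only [lieC, fderiv_apply hX, fderiv_apply hY, ContinuousLinearMap.comp_apply,
    ContinuousLinearMap.proj_apply, Finset.sum_sub_distrib, Pi.sub_apply]
  conv_rhs => rw [pi_eq_sum_univ' (X p), pi_eq_sum_univ' (Y p)]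
  simp

@[fun_prop] theorem Differentiable.vecCons {𝕜 E F : Type*} [NontriviallyNormedField 𝕜]
    [NormedAddCommGroup E] [NormedSpace 𝕜 E] [NormedAddCommGroup F] [NormedSpace 𝕜 F] {n : ℕ}
    {f : E → F} {g : E → Fin n → F} (hf : Differentiable 𝕜 f) (hg : Differentiable 𝕜 g) :
    Differentiable 𝕜 fun x => Matrix.vecCons (f x) (g x) := by
  rw [differentiable_pi]
  intro i
  refine Fin.cases ?_ (fun j => ?_) i
  · simpa using hf
  · simpa using differentiable_pi.1 hg j

@[fun_prop] theorem differentiable_S2 : Differentiable ℂ S2 := by unfold S2; fun_prop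
@[fun_prop] theorem differentiable_S1 : Differentiable ℂ S1 := by unfold S1; fun_prop
@[fun_prop] theorem differentiable_Tf : Differentiable ℂ Tf := by unfold Tf; fun_prop
@[fun_prop] theorem differentiable_L1 : Differentiable ℂ L1 := by unfold L1; fun_prop
@[fun_prop] theorem differentiable_L2 : Differentiable ℂ L2 := by unfold L2; fun_prop
@[fun_prop] theorem differentiable_Df : Differentiable ℂ Df := by unfold Df; fun_prop
@[fun_prop] theorem differentiable_Rf : Differentiable ℂ Rf := by unfold Rf; fun_prop

theorem fderiv_S2 (p : Fin 4 → ℂ) : fderiv ℂ S2 p = 0 := fderiv_const_apply _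
theorem fderiv_S1 (p : Fin 4 → ℂ) : fderiv ℂ S1 p = 0 := fderiv_const_apply _
theorem fderiv_Tf (p : Fin 4 → ℂ) : fderiv ℂ Tf p = 0 := fderiv_const_apply _

theorem fderiv_L1_apply (p v : Fin 4 → ℂ) :
    fderiv ℂ L1 p v = ![0, 2 * I * v 0, 4 * I * p 0 * v 0 + 4 * v 1, 4 * p 0 * v 0] := by
  ext i
  rw [fderiv_apply_apply (differentiable_L1 p)]
  fin_cases i <;>
    simp (disch := fun_prop) only [L1, Fin.isValue, Fin.zero_eta, Fin.mk_one, Fin.reduceFinMk,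
      Matrix.cons_val_zero, Matrix.cons_val_one, Matrix.cons_val, fderiv_fun_const, fderiv_fun_add,
      fderiv_const_mul, fderiv_fun_pow, fderiv_eval, Pi.zero_apply, zero_apply, add_apply, smul_apply,
      ContinuousLinearMap.proj_apply, smul_eq_mul, nsmul_eq_mul] <;>
    ring

theorem fderiv_L2_apply (p v : Fin 4 → ℂ) :
    fderiv ℂ L2 p v = ![0, 2 * v 0, 4 * p 0 * v 0, -(4 * I * p 0 * v 0) + 4 * v 1] := by
  ext i
  rw [fderiv_apply_apply (differentiable_L2 p)]
  fin_cases i <;>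
    simp (disch := fun_prop) only [L2, neg_sub, Fin.isValue, Fin.zero_eta, Fin.mk_one,
      Fin.reduceFinMk, Matrix.cons_val_zero, Matrix.cons_val_one, Matrix.cons_val, fderiv_fun_const,
      fderiv_fun_sub, fderiv_const_mul, fderiv_fun_pow, fderiv_eval, Pi.zero_apply, zero_apply,
      sub_apply, smul_apply, ContinuousLinearMap.proj_apply, smul_eq_mul, nsmul_eq_mul] <;>
    ring

theorem fderiv_Df_apply (p v : Fin 4 → ℂ) : fderiv ℂ Df p v = Df v := by
  ext i
  rw [fderiv_apply_apply (differentiable_Df p)]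
  fin_cases i <;> simp (disch := fun_prop) [Df, fderiv_const_mul, fderiv_eval]

theorem fderiv_Rf_apply (p v : Fin 4 → ℂ) : fderiv ℂ Rf p v = Rf v := by
  ext i
  rw [fderiv_apply_apply (differentiable_Rf p)]
  fin_cases i <;> simp (disch := fun_prop) [Rf, fderiv_fun_neg, fderiv_const_mul, fderiv_eval]

/-- The commutator table of the 7 infinitesimal CR automorphisms of
Beloshapka's cubic model. -/
theorem autCR_bracket_table :
    (∀ p, lieC Tf L2 p = (4 : ℂ) • S2 p) ∧
    (∀ p, lieC Tf L1 p = (4 : ℂ) • S1 p) ∧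
    (∀ p, lieC L2 L1 p = (-4 : ℂ) • Tf p) ∧
    (∀ p, lieC S2 Df p = (3 : ℂ) • S2 p) ∧
    (∀ p, lieC S1 Df p = (3 : ℂ) • S1 p) ∧
    (∀ p, lieC Tf Df p = (2 : ℂ) • Tf p) ∧
    (∀ p, lieC L2 Df p = L2 p) ∧
    (∀ p, lieC L1 Df p = L1 p) ∧
    (∀ p, lieC S2 Rf p = -S1 p) ∧
    (∀ p, lieC S1 Rf p = S2 p) ∧
    (∀ p, lieC L2 Rf p = -L1 p) ∧
    (∀ p, lieC L1 Rf p = L2 p) ∧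
    (∀ p, lieC Df Rf p = 0) ∧
    (∀ p, lieC Tf Rf p = 0) := by
  refine ⟨?_, ?_, ?_, ?_, ?_, ?_, ?_, ?_, ?_, ?_, ?_, ?_, ?_, ?_⟩ <;> intro p <;>
    rw [lieC_eq_fderiv_sub (by fun_prop) (by fun_prop)] <;>
    simp only [fderiv_S2, fderiv_S1, fderiv_Tf, fderiv_L1_apply, fderiv_L2_apply, fderiv_Df_apply,
      fderiv_Rf_apply, zero_apply] <;>
    ext i <;> fin_cases i <;>
    simp only [S2, S1, Tf, L1, L2, Df, Rf, Pi.sub_apply, Pi.smul_apply, Pi.neg_apply,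
      Pi.zero_apply, smul_eq_mul, Fin.isValue, Fin.zero_eta, Fin.mk_one, Fin.reduceFinMk,
      Matrix.cons_val_zero, Matrix.cons_val_one, Matrix.cons_val] <;>
    grind [I_sq]
end

section
/- The complex span of S2, S1, T, L2, L1, D, R is closed under Lie bracket, hence forms a 7-dimensional Lie algebra of vector fields on C^4. -/
/-!
In coordinates the bracket is `[X, Y](p) = DY(p) X(p) - DX(p) Y(p)`. It is antisymmetric and,
on holomorphic fields, bilinear, so the span of holomorphic generators `b i` is closed under it
as soon as every `[b i, b j]` with `i < j` lies in the span. For the seven generators each of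
these 21 brackets is a constant multiple of a generator (or zero). A vanishing linear
combination of the generators, evaluated at `0`, `e₀` and `e₁`, forces all coefficients to
vanish, so the span has dimension 7.
-/

open Complex

open Submodule Set

local notation "VF" => (Fin 4 → ℂ) → Fin 4 → ℂ

theorem differentiable_of_mem_span {𝕜 E F : Type*} [NontriviallyNormedField 𝕜]
    [NormedAddCommGroup E] [NormedSpace 𝕜 E] [NormedAddCommGroup F] [NormedSpace 𝕜 F]
    {s : Set (E → F)} (hs : ∀ f ∈ s, Differentiable 𝕜 f) {f : E → F}
    (hf : f ∈ span 𝕜 s) : Differentiable 𝕜 f := by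
  induction hf using span_induction with
  | mem f hf => exact hs f hf
  | zero => exact differentiable_const 0
  | add _ _ _ _ hf hg => exact hf.add hg
  | smul c _ _ hf => exact hf.const_smul c

-- With `fun_prop` as discharger, these let `simp` differentiate the polynomial coefficients.
attribute [local simp] fderiv_fun_add fderiv_fun_sub fderiv_fun_neg fderiv_const_mul
  fderiv_fun_pow fderiv_apply

section Bracket

variable {X X' Y Y' : VF}

theorem lieC_apply (X Y : VF) (p : Fin 4 → ℂ) (i : Fin 4) :
    lieC X Y p i = fderiv ℂ (fun q => Y q i) p (X p) - fderiv ℂ (fun q => X q i) p (Y p) := by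
  have expand (L : (Fin 4 → ℂ) →L[ℂ] ℂ) (v : Fin 4 → ℂ) :
      ∑ j, v j * L (Pi.single j 1) = L v :=
    calc ∑ j, v j * L (Pi.single j 1) = ∑ j, L (Pi.single j (v j)) := by
          refine Finset.sum_congr rfl fun j _ => ?_
          rw [← smul_eq_mul, ← map_smul, ← Pi.single_smul', smul_eq_mul, mul_one]
      _ = L v := by rw [← map_sum, Finset.univ_sum_single]
  simp only [lieC, Finset.sum_sub_distrib, expand]

theorem lieC_skew (X Y : VF) : -lieC Y X = lieC X Y := by
  ext p i
  simp [lieC_apply]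

theorem lieC_self (X : VF) : lieC X X = 0 := by
  ext p i
  simp [lieC_apply]

theorem lieC_zero_left (Y : VF) : lieC 0 Y = 0 := by
  ext p i
  simp [lieC_apply]

theorem lieC_zero_right (X : VF) : lieC X 0 = 0 := by
  rw [← lieC_skew, lieC_zero_left, neg_zero]

theorem lieC_add_left (hX : Differentiable ℂ X) (hX' : Differentiable ℂ X') :
    lieC (X + X') Y = lieC X Y + lieC X' Y := by
  ext p i
  simp (disch := fun_prop) [lieC_apply]
  ring

theorem lieC_smul_left (hX : Differentiable ℂ X) (c : ℂ) :
    lieC (c • X) Y = c • lieC X Y := by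
  ext p i
  simp (disch := fun_prop) [lieC_apply]
  ring

theorem lieC_add_right (hY : Differentiable ℂ Y) (hY' : Differentiable ℂ Y') :
    lieC X (Y + Y') = lieC X Y + lieC X Y' := by
  rw [← lieC_skew, lieC_add_left hY hY', neg_add, lieC_skew, lieC_skew]

theorem lieC_smul_right (hY : Differentiable ℂ Y) (c : ℂ) :
    lieC X (c • Y) = c • lieC X Y := by
  rw [← lieC_skew, lieC_smul_left hY, ← smul_neg, lieC_skew]

theorem lieC_mem_span_range {ι : Type*} [LinearOrder ι] {b : ι → VF}
    (hb : ∀ i, Differentiable ℂ (b i))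
    (hbr : ∀ i j, i < j → lieC (b i) (b j) ∈ span ℂ (range b))
    (hX : X ∈ span ℂ (range b)) (hY : Y ∈ span ℂ (range b)) :
    lieC X Y ∈ span ℂ (range b) := by
  have hdiff {Z : VF} (hZ : Z ∈ span ℂ (range b)) : Differentiable ℂ Z :=
    differentiable_of_mem_span (forall_mem_range.2 hb) hZ
  induction hX, hY using span_induction₂ with
  | mem_mem X Y hX hY =>
    obtain ⟨i, rfl⟩ := hX
    obtain ⟨j, rfl⟩ := hY
    rcases lt_trichotomy i j with hij | rfl | hji
    · exact hbr i j hij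
    · rw [lieC_self]; exact zero_mem _
    · rw [← lieC_skew]; exact neg_mem (hbr j i hji)
  | zero_left => rw [lieC_zero_left]; exact zero_mem _
  | zero_right => rw [lieC_zero_right]; exact zero_mem _
  | add_left X X' Y hX hX' _ h h' =>
    rw [lieC_add_left (hdiff hX) (hdiff hX')]; exact add_mem h h'
  | add_right X Y Y' _ hY hY' h h' =>
    rw [lieC_add_right (hdiff hY) (hdiff hY')]; exact add_mem h h'
  | smul_left c X Y hX _ h => rw [lieC_smul_left (hdiff hX)]; exact smul_mem _ c h
  | smul_right c X Y _ hY h => rw [lieC_smul_right (hdiff hY)]; exact smul_mem _ c h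

end Bracket

theorem lieC_S2_S1 : lieC S2 S1 = 0 := by
  ext p i
  fin_cases i <;> simp (disch := fun_prop) [lieC_apply, S2, S1]

theorem lieC_S2_Tf : lieC S2 Tf = 0 := by
  ext p i
  fin_cases i <;> simp (disch := fun_prop) [lieC_apply, S2, Tf]

theorem lieC_S2_L2 : lieC S2 L2 = 0 := by
  ext p i
  fin_cases i <;> simp (disch := fun_prop) [lieC_apply, S2, L2]

theorem lieC_S2_L1 : lieC S2 L1 = 0 := by
  ext p i
  fin_cases i <;> simp (disch := fun_prop) [lieC_apply, S2, L1]

theorem lieC_S2_Df : lieC S2 Df = (3 : ℂ) • S2 := by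
  ext p i
  fin_cases i <;> simp (disch := fun_prop) [lieC_apply, S2, Df]

theorem lieC_S2_Rf : lieC S2 Rf = -S1 := by
  ext p i
  fin_cases i <;> simp (disch := fun_prop) [lieC_apply, S2, Rf, S1]

theorem lieC_S1_Tf : lieC S1 Tf = 0 := by
  ext p i
  fin_cases i <;> simp (disch := fun_prop) [lieC_apply, S1, Tf]

theorem lieC_S1_L2 : lieC S1 L2 = 0 := by
  ext p i
  fin_cases i <;> simp (disch := fun_prop) [lieC_apply, S1, L2]

theorem lieC_S1_L1 : lieC S1 L1 = 0 := by
  ext p i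
  fin_cases i <;> simp (disch := fun_prop) [lieC_apply, S1, L1]

theorem lieC_S1_Df : lieC S1 Df = (3 : ℂ) • S1 := by
  ext p i
  fin_cases i <;> simp (disch := fun_prop) [lieC_apply, S1, Df]

theorem lieC_S1_Rf : lieC S1 Rf = S2 := by
  ext p i
  fin_cases i <;> simp (disch := fun_prop) [lieC_apply, S1, Rf, S2]

theorem lieC_Tf_L2 : lieC Tf L2 = (4 : ℂ) • S2 := by
  ext p i
  fin_cases i <;> simp (disch := fun_prop) [lieC_apply, Tf, L2, S2]

theorem lieC_Tf_L1 : lieC Tf L1 = (4 : ℂ) • S1 := by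
  ext p i
  fin_cases i <;> simp (disch := fun_prop) [lieC_apply, Tf, L1, S1]

theorem lieC_Tf_Df : lieC Tf Df = (2 : ℂ) • Tf := by
  ext p i
  fin_cases i <;> simp (disch := fun_prop) [lieC_apply, Tf, Df]

theorem lieC_Tf_Rf : lieC Tf Rf = 0 := by
  ext p i
  fin_cases i <;> simp (disch := fun_prop) [lieC_apply, Tf, Rf]

theorem lieC_L2_L1 : lieC L2 L1 = (-4 : ℂ) • Tf := by
  ext p i
  fin_cases i <;> simp (disch := fun_prop) [lieC_apply, L2, L1, Tf] <;> grind [I_sq]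

theorem lieC_L2_Df : lieC L2 Df = L2 := by
  ext p i
  fin_cases i <;> simp (disch := fun_prop) [lieC_apply, L2, Df] <;> grind [I_sq]

theorem lieC_L2_Rf : lieC L2 Rf = -L1 := by
  ext p i
  fin_cases i <;> simp (disch := fun_prop) [lieC_apply, L2, Rf, L1] <;> grind [I_sq]

theorem lieC_L1_Df : lieC L1 Df = L1 := by
  ext p i
  fin_cases i <;> simp (disch := fun_prop) [lieC_apply, L1, Df] <;> grind [I_sq]

theorem lieC_L1_Rf : lieC L1 Rf = L2 := by
  ext p i
  fin_cases i <;> simp (disch := fun_prop) [lieC_apply, L1, Rf, L2] <;> grind [I_sq]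

theorem lieC_Df_Rf : lieC Df Rf = 0 := by
  ext p i
  fin_cases i <;> simp (disch := fun_prop) [lieC_apply, Df, Rf]

def autCRGen : Fin 7 → VF := ![S2, S1, Tf, L2, L1, Df, Rf]

theorem range_autCRGen : range autCRGen = {S2, S1, Tf, L2, L1, Df, Rf} := by
  ext X
  simp [autCRGen]
  tauto

theorem differentiable_autCRGen (i : Fin 7) : Differentiable ℂ (autCRGen i) := by
  refine differentiable_pi.2 fun k => ?_
  fin_cases i <;> fin_cases k <;> simp [autCRGen, S2, S1, Tf, L2, L1, Df, Rf] <;> fun_prop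

theorem lieC_autCRGen_mem_span {i j : Fin 7} (hij : i < j) :
    lieC (autCRGen i) (autCRGen j) ∈ span ℂ (range autCRGen) := by
  rw [range_autCRGen]
  fin_cases i <;> fin_cases j <;> simp at hij <;>
    simp [autCRGen, mem_span_of_mem, smul_mem, lieC_S2_S1, lieC_S2_Tf, lieC_S2_L2, lieC_S2_L1,
      lieC_S2_Df, lieC_S2_Rf, lieC_S1_Tf, lieC_S1_L2, lieC_S1_L1, lieC_S1_Df, lieC_S1_Rf,
      lieC_Tf_L2, lieC_Tf_L1, lieC_Tf_Df, lieC_Tf_Rf, lieC_L2_L1, lieC_L2_Df, lieC_L2_Rf,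
      lieC_L1_Df, lieC_L1_Rf, lieC_Df_Rf]

theorem linearIndependent_autCRGen : LinearIndependent ℂ autCRGen := by
  rw [Fintype.linearIndependent_iff]
  intro g hg
  have eval (p : Fin 4 → ℂ) (k : Fin 4) : ∑ i, g i * autCRGen i p k = 0 := by
    simpa using congr_fun (congr_fun hg p) k
  have h00 := eval 0 0
  have h01 := eval 0 1
  have h02 := eval 0 2
  have h03 := eval 0 3
  have he0 := eval (Pi.single 0 1) 0
  have he1 := eval (Pi.single 0 1) 1
  have hf1 := eval (Pi.single 1 1) 1
  simp [Fin.sum_univ_seven, autCRGen, S2, S1, Tf, L2, L1, Df, Rf] at h00 h01 h02 h03 he0 he1 hf1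
  have h5 : g 5 = 0 := by linear_combination (hf1 - h01) / 2
  have h3 : g 3 = 0 := by linear_combination (he1 - h01 - 2 * I * h00) / 4 + g 3 / 2 * I_sq
  have h4 : g 4 = 0 := by linear_combination h00 - I * h3
  have h6 : g 6 = 0 := by linear_combination -I * (he0 - h00 - h5) + g 6 * I_sq
  intro i
  fin_cases i <;> assumption

/-- The complex span of `S2, S1, T, L2, L1, D, R` is closed under Lie bracket,
hence forms a 7-dimensional Lie algebra of vector fields on `ℂ⁴`. -/
theorem autCR_span_closed :
    (∀ X Y : (Fin 4 → ℂ) → Fin 4 → ℂ,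
      X ∈ Submodule.span ℂ ({S2, S1, Tf, L2, L1, Df, Rf} :
        Set ((Fin 4 → ℂ) → Fin 4 → ℂ)) →
      Y ∈ Submodule.span ℂ ({S2, S1, Tf, L2, L1, Df, Rf} :
        Set ((Fin 4 → ℂ) → Fin 4 → ℂ)) →
      lieC X Y ∈ Submodule.span ℂ ({S2, S1, Tf, L2, L1, Df, Rf} :
        Set ((Fin 4 → ℂ) → Fin 4 → ℂ))) ∧
    Module.finrank ℂ
      (Submodule.span ℂ ({S2, S1, Tf, L2, L1, Df, Rf} :
        Set ((Fin 4 → ℂ) → Fin 4 → ℂ))) = 7 := by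
  rw [← range_autCRGen]
  refine ⟨fun X Y hX hY => ?_, ?_⟩
  · exact lieC_mem_span_range differentiable_autCRGen
      (fun i j hij => lieC_autCRGen_mem_span hij) hX hY
  · rw [finrank_span_eq_card linearIndependent_autCRGen, Fintype.card_fin]
end
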